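/- Let $K = k(x)$ be a rational function field over a field $k$ of characteristic $p > 0$ containing the $n$th roots of unity, $\gcd(n,p)=1$, and let $L = K(y)$ with $y^n = f(x) = \alpha \prod_{i=1}^r p_i(x)^{v_i}$ where the $p_i$ are distinct monic irreducible polynomials of degree $d_i$, $0 < v_i < n$, $\alpha \in k^*$, and $n \mid \deg f$. Let $e_i = n/\gcd(n, v_i)$ and $m_i = e_i v_i / n$. For $1 \leq \mu \leq n-1$, define integers $\lambda_i^\mu, \rho_i^\mu$ by $e_i \lambda_i^\mu + \rho_i^\mu = \mu m_i + e_i - 1$ with $0 \leq \rho_i^\mu \leq e_i - 1$, and set $t^\mu = \sum_{i=1}^r \frac{d_i}{e_i}(e_i - 1 - \rho_i^\mu)$. Assume further that there is no integer $d > 1$ dividing $\gcd(v_i, n)$ for all $i$. Then $t^\mu \geq 1$ for all $\mu \in \{1, \ldots, n-1\}$. -/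

import Mathlib

private lemma stmt7_aux1 {nn g vv : ℕ} (hg : 0 < g) (hnn : 0 < nn) (h1 : g ∣ nn)
    (h2 : g ∣ vv) : nn / g * vv / nn = vv / g := by
  obtain ⟨u, rfl⟩ := h1
  obtain ⟨w, rfl⟩ := h2
  have hu : 0 < u := Nat.pos_of_ne_zero (fun h => by simp [h] at hnn)
  rw [Nat.mul_div_cancel_left u hg, Nat.mul_div_cancel_left w hg]
  have h3 : u * (g * w) = g * u * w := by ring
  rw [h3, Nat.mul_div_cancel_left w (Nat.mul_pos hg hu)]

private lemma stmt7_aux2 {nn g vv : ℕ} (hg : 0 < g) (h1 : g ∣ nn) (h2 : g ∣ vv) :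
    vv / g * nn = vv * (nn / g) := by
  obtain ⟨u, rfl⟩ := h1
  obtain ⟨w, rfl⟩ := h2
  rw [Nat.mul_div_cancel_left u hg, Nat.mul_div_cancel_left w hg]
  ring


/-- Positivity of the Boseck invariants `t^μ` for a Kummer extension
`L = K(y)`, `yⁿ = f(x) = α ∏ pᵢ(x)^{vᵢ}`, of the rational function field `K = k(x)`,
with the place at infinity unramified (`n ∣ deg f`) and no `d > 1` dividing all
`gcd(vᵢ, n)`: for all `1 ≤ μ ≤ n-1`, `t^μ ≥ 1`. -/
theorem stmt_7 {k : Type*} [Field k] (p : ℕ) [Fact p.Prime] [CharP k p]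
    (n : ℕ) (hn : 0 < n) (hnp : Nat.Coprime n p)
    (hroot : ∃ ζ : k, IsPrimitiveRoot ζ n)
    (r : ℕ) (P : Fin r → Polynomial k)
    (hmonic : ∀ i, (P i).Monic) (hirr : ∀ i, Irreducible (P i))
    (hdist : Function.Injective P)
    (v : Fin r → ℕ) (hv : ∀ i, 0 < v i) (hvn : ∀ i, v i < n)
    (α : k) (hα : α ≠ 0)
    (f : Polynomial k) (hf : f = Polynomial.C α * ∏ i, P i ^ v i)
    (hdeg : n ∣ f.natDegree)
    {L : Type*} [Field L] [Algebra (RatFunc k) L]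
    (y : L)
    (hy : y ^ n = algebraMap (RatFunc k) L (algebraMap (Polynomial k) (RatFunc k) f))
    (hgen : IntermediateField.adjoin (RatFunc k) {y} = ⊤)
    (hdegL : Module.finrank (RatFunc k) L = n)
    (hnocd : ¬ ∃ d : ℕ, 1 < d ∧ ∀ i, d ∣ Nat.gcd (v i) n)
    (e m : Fin r → ℕ)
    (he : ∀ i, e i = n / Nat.gcd n (v i)) (hm : ∀ i, m i = e i * v i / n)
    (d : Fin r → ℕ) (hd : ∀ i, d i = (P i).natDegree)
    (ρ : Fin r → ℕ → ℕ) (hρ : ∀ i μ, ρ i μ = (μ * m i + e i - 1) % e i)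
    (t : ℕ → ℚ)
    (ht : ∀ μ, t μ = ∑ i, (d i : ℚ) / (e i : ℚ) * ((e i : ℚ) - 1 - (ρ i μ : ℚ))) :
    ∀ μ : ℕ, 1 ≤ μ → μ ≤ n - 1 → 1 ≤ t μ := by
  intro μ hμ1 hμn
  have hn2 : 2 ≤ n := by omega
  have hg : ∀ i, 0 < Nat.gcd n (v i) := fun i => Nat.gcd_pos_of_pos_left _ hn
  have hgn : ∀ i, Nat.gcd n (v i) ∣ n := fun i => Nat.gcd_dvd_left _ _
  have hgv : ∀ i, Nat.gcd n (v i) ∣ v i := fun i => Nat.gcd_dvd_right _ _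
  have he_pos : ∀ i, 0 < e i := by
    intro i; rw [he i]; exact Nat.div_pos (Nat.le_of_dvd hn (hgn i)) (hg i)
  have hen : ∀ i, e i ∣ n := by intro i; rw [he i]; exact Nat.div_dvd_of_dvd (hgn i)
  have hm' : ∀ i, m i = v i / Nat.gcd n (v i) := by
    intro i
    rw [hm i, he i]
    exact stmt7_aux1 (hg i) hn (hgn i) (hgv i)
  have hm_pos : ∀ i, 0 < m i := by
    intro i; rw [hm' i]
    exact Nat.div_pos (Nat.le_of_dvd (hv i) (hgv i)) (hg i)
  have hcop : ∀ i, Nat.Coprime (e i) (m i) := by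
    intro i; rw [he i, hm' i]
    exact Nat.coprime_div_gcd_div_gcd (hg i)
  have hρ_lt : ∀ i, ρ i μ < e i := by
    intro i; rw [hρ]; exact Nat.mod_lt _ (he_pos i)
  have hd_pos : ∀ i, 0 < d i := by
    intro i; rw [hd i]; exact (hirr i).natDegree_pos
  set q : Fin r → ℕ := fun i => (μ * m i + e i - 1) / e i with hq
  have hdivmod : ∀ i, e i * q i + ρ i μ = μ * m i + e i - 1 := by
    intro i; rw [hρ, hq]; exact Nat.div_add_mod _ _
  have hmn_ve : ∀ i, m i * n = v i * e i := by
    intro i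
    rw [hm' i, he i]
    exact stmt7_aux2 (hg i) (hgn i) (hgv i)
  have hμm1 : ∀ i, 1 ≤ μ * m i := fun i =>
    Nat.one_le_iff_ne_zero.mpr (Nat.mul_ne_zero (by omega) (hm_pos i).ne')
  -- each summand rewritten
  have hterm : ∀ i, (d i : ℚ) / (e i : ℚ) * ((e i : ℚ) - 1 - (ρ i μ : ℚ))
      = (d i : ℚ) * (q i : ℚ) - (μ : ℚ) * ((d i : ℚ) * (v i : ℚ) / (n : ℚ)) := by
    intro i
    have hE : (e i : ℚ) ≠ 0 := Nat.cast_ne_zero.mpr (he_pos i).ne'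
    have hN : (n : ℚ) ≠ 0 := Nat.cast_ne_zero.mpr hn.ne'
    have h1 : (e i : ℚ) * (q i : ℚ) + (ρ i μ : ℚ) = (μ : ℚ) * (m i : ℚ) + (e i : ℚ) - 1 := by
      have h2 := congrArg (fun x : ℕ => (x : ℚ)) (hdivmod i)
      have h3 : ((μ * m i + e i - 1 : ℕ) : ℚ) = (μ : ℚ) * (m i : ℚ) + (e i : ℚ) - 1 := by
        have h4 : 1 ≤ μ * m i + e i := le_add_right (hμm1 i)
        push_cast [Nat.cast_sub h4]
        ring
      push_cast at h2
      linarith [h2, h3]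
    have hmve : (m i : ℚ) / (e i : ℚ) = (v i : ℚ) / (n : ℚ) := by
      rw [div_eq_div_iff hE hN]
      exact_mod_cast hmn_ve i
    have h4 : (e i : ℚ) - 1 - (ρ i μ : ℚ) = (e i : ℚ) * (q i : ℚ) - (μ : ℚ) * (m i : ℚ) := by
      linarith
    rw [h4]
    calc (d i : ℚ) / (e i) * ((e i : ℚ) * q i - μ * m i)
        = (d i : ℚ) * q i - μ * ((d i : ℚ) * ((m i : ℚ) / e i)) := by
          field_simp
      _ = (d i : ℚ) * q i - μ * ((d i : ℚ) * (v i : ℚ) / n) := by rw [hmve]; ring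
  -- degree of f
  have hdegsum : f.natDegree = ∑ i, v i * d i := by
    rw [hf, Polynomial.natDegree_C_mul hα,
      Polynomial.natDegree_prod _ _ (fun i _ => pow_ne_zero _ (hmonic i).ne_zero)]
    exact Finset.sum_congr rfl fun i _ => by rw [Polynomial.natDegree_pow, hd i]
  obtain ⟨K0, hK0⟩ := hdeg
  -- t μ equals an integer
  have htint : t μ = ((∑ i, d i * q i : ℕ) : ℚ) - (μ : ℚ) * (K0 : ℚ) := by
    rw [ht μ, Finset.sum_congr rfl fun i _ => hterm i, Finset.sum_sub_distrib]
    congr 1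
    · push_cast; rfl
    · rw [← Finset.mul_sum]
      congr 1
      have hN : (n : ℚ) ≠ 0 := Nat.cast_ne_zero.mpr hn.ne'
      have h5 : ((∑ i, v i * d i : ℕ) : ℚ) = ((n * K0 : ℕ) : ℚ) := by
        rw [← hdegsum, ← hK0]
      push_cast at h5
      rw [← Finset.sum_div, div_eq_iff hN]
      calc ∑ i, (d i : ℚ) * (v i : ℚ) = ∑ i, (v i : ℚ) * (d i : ℚ) :=
            Finset.sum_congr rfl fun i _ => by ring
        _ = (n : ℚ) * K0 := h5
        _ = (K0 : ℚ) * n := by ring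
  -- nonnegativity of each term
  have hnonneg : ∀ i ∈ Finset.univ,
      (0:ℚ) ≤ (d i : ℚ) / (e i : ℚ) * ((e i : ℚ) - 1 - (ρ i μ : ℚ)) := by
    intro i _
    have h1 : (0:ℚ) ≤ (d i : ℚ) / (e i : ℚ) :=
      div_nonneg (Nat.cast_nonneg _) (Nat.cast_nonneg _)
    have h2 : (ρ i μ : ℚ) + 1 ≤ (e i : ℚ) := by exact_mod_cast hρ_lt i
    have h3 : (0:ℚ) ≤ (e i : ℚ) - 1 - (ρ i μ : ℚ) := by linarith
    exact mul_nonneg h1 h3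
  -- positivity of t μ
  have hpos : 0 < t μ := by
    rcases lt_or_eq_of_le (Finset.sum_nonneg hnonneg) with h | h
    · rw [ht μ]; exact h
    · exfalso
      have hzero := (Finset.sum_eq_zero_iff_of_nonneg hnonneg).mp h.symm
      have hρe : ∀ i, ρ i μ = e i - 1 := by
        intro i
        have h0 := hzero i (Finset.mem_univ i)
        have hE : (e i : ℚ) ≠ 0 := Nat.cast_ne_zero.mpr (he_pos i).ne'
        have hD : (d i : ℚ) ≠ 0 := Nat.cast_ne_zero.mpr (hd_pos i).ne'
        have h6 : (e i : ℚ) - 1 - (ρ i μ : ℚ) = 0 := by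
          rcases mul_eq_zero.mp h0 with h1 | h1
          · exact absurd h1 (div_ne_zero hD hE)
          · exact h1
        have h7 : (ρ i μ : ℚ) = ((e i - 1 : ℕ) : ℚ) := by
          rw [Nat.cast_sub (he_pos i)]; push_cast; linarith
        exact_mod_cast h7
      have hediv : ∀ i, e i ∣ μ := by
        intro i
        have h1 : e i ∣ μ * m i := by
          have hmod := (hρ i μ).symm.trans (hρe i)
          have hb : μ * m i + e i - 1 = (μ * m i - 1) + e i := by
            have := hμm1 i; omega
          rw [hb, Nat.add_mod_right] at hmod
          have hq2 := Nat.div_add_mod (μ * m i - 1) (e i)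
          refine ⟨(μ * m i - 1) / e i + 1, ?_⟩
          have hexp : e i * ((μ * m i - 1) / e i + 1) = e i * ((μ * m i - 1) / e i) + e i := by
            ring
          have h8 := hμm1 i
          have h9 := he_pos i
          omega
        exact (hcop i).dvd_of_dvd_mul_right h1
      -- construct the common divisor n / gcd μ n
      set c := Nat.gcd μ n with hc
      have hc_pos : 0 < c := Nat.gcd_pos_of_pos_left _ (by omega)
      have hc_dvd : c ∣ n := Nat.gcd_dvd_right _ _
      have hc_lt : c < n :=
        lt_of_le_of_lt (Nat.le_of_dvd (by omega) (Nat.gcd_dvd_left _ _)) (by omega)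
      have hcmul : c * (n / c) = n := Nat.mul_div_cancel' hc_dvd
      have hq2 : 2 ≤ n / c := by
        rcases Nat.lt_or_ge (n / c) 2 with h2 | h2
        · interval_cases h3 : n / c <;> omega
        · exact h2
      apply hnocd
      refine ⟨n / c, by omega, fun i => ?_⟩
      rw [Nat.gcd_comm]
      have hec : e i ∣ c := Nat.dvd_gcd (hediv i) (hen i)
      have h5 : n / e i = Nat.gcd n (v i) := by
        rw [he i, Nat.div_div_self (hgn i) hn.ne']
      rw [← h5]
      obtain ⟨s, hs⟩ := hec
      obtain ⟨u, hu⟩ := hc_dvd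
      have h6 : n / c = u := by rw [hu, Nat.mul_div_cancel_left u hc_pos]
      have h7 : n / e i = s * u := by
        rw [hu, hs, mul_assoc, Nat.mul_div_cancel_left _ (he_pos i)]
      exact ⟨s, by rw [h7, h6]; ring⟩
  -- conclude via integrality
  have hz : t μ = (((∑ i, d i * q i : ℕ) : ℤ) - (μ : ℤ) * (K0 : ℤ) : ℤ) := by
    rw [htint]; push_cast; ring
  rw [hz] at hpos ⊢
  have h10 : (0:ℤ) < ((∑ i, d i * q i : ℕ) : ℤ) - (μ : ℤ) * (K0 : ℤ) := by
    exact_mod_cast hpos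
  exact_mod_cast h10
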